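/- arXiv:2604.01890 — 2 statements merged into one kernel-verified Lean document; each statement's English description precedes it below -/
import Mathlib

section
/- With the graph notation below, assume S admits an orthonormal eigenbasis with eigenvalues 1 = λ₁ > λ₂ ≥ ⋯ ≥ λ_N > −1, and let λ = max(|λ₂|, |λ_N|) satisfy 0 < λ < 1. Then for every ε > 0 and every integer ℓ ≥ log(2/(ε(1−λ)))/(2 log(1/λ)), and every node i ∈ {1,…,N}, one has | ((I − S²)†)_{ii} − Σ_{j=0}^{ℓ−1} ( (P^{2j})_{ii} − π_i ) | ≤ ε/2. -/
open Matrix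

/-- `P` is the Moore–Penrose pseudoinverse of `M`. -/
def IsMoorePenrose {n : Type*} [Fintype n] [DecidableEq n]
    (M P : Matrix n n ℝ) : Prop :=
  M * P * M = M ∧ P * M * P = P ∧ (M * P)ᵀ = M * P ∧ (P * M)ᵀ = P * M

/-!
Let `U` be the orthogonal matrix whose rows are the eigenvectors `ψ k`, so that
`S = Uᵀ diag(λ) U`. Then `I - S² = Uᵀ diag(1 - λ²) U`, whose pseudoinverse is
`Uᵀ diag((1 - λ²)⁻¹) U`; `P` is conjugate to `S` by the diagonal matrix `D^{1/2}`, so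
`P^m` and `S^m` have the same diagonal; and `√d` spans the `1`-eigenspace of `S`, so `π_i = ψ₀(i)²`. With the weights
`w_k = ψ_k(i)²`, which sum to `1`, the error is the geometric tail
`Σ_{k ≠ 0} λ_k^{2ℓ} / (1 - λ_k²) w_k ≤ λ^{2ℓ} / (1 - λ²) ≤ λ^{2ℓ} / (1 - λ)`,
and the choice of `ℓ` makes the last quantity at most `ε / 2`.
-/

open Finset

theorem IsMoorePenrose.unique {n : Type*} [Fintype n] [DecidableEq n] {M P₁ P₂ : Matrix n n ℝ}
    (h₁ : IsMoorePenrose M P₁) (h₂ : IsMoorePenrose M P₂) : P₁ = P₂ := by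
  obtain ⟨hMPM₁, hPMP₁, hMP₁, hPM₁⟩ := h₁
  obtain ⟨hMPM₂, hPMP₂, hMP₂, hPM₂⟩ := h₂
  have hMP : M * P₁ = M * P₂ := by
    calc M * P₁ = (M * P₂ * M * P₁)ᵀ := by rw [hMPM₂, hMP₁]
      _ = (M * P₁)ᵀ * (M * P₂)ᵀ := by simp only [transpose_mul, Matrix.mul_assoc]
      _ = M * P₂ := by rw [hMP₁, hMP₂, ← Matrix.mul_assoc, hMPM₁]
  have hPM : P₁ * M = P₂ * M := by
    calc P₁ * M = (P₁ * (M * P₂ * M))ᵀ := by rw [hMPM₂, hPM₁]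
      _ = (P₂ * M)ᵀ * (P₁ * M)ᵀ := by simp only [transpose_mul, Matrix.mul_assoc]
      _ = P₂ * M := by rw [hPM₁, hPM₂, Matrix.mul_assoc, ← Matrix.mul_assoc M, hMPM₁]
  calc P₁ = P₁ * M * P₁ := hPMP₁.symm
    _ = P₂ * M * P₂ := by rw [hPM, Matrix.mul_assoc, hMP, ← Matrix.mul_assoc]
    _ = P₂ := hPMP₂

section OrthogonalConj

variable {n : Type*} [Fintype n] [DecidableEq n] {U : Matrix n n ℝ}

theorem of_mul_transpose_of_orthonormal {ψ : n → n → ℝ}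
    (h : ∀ k l, ψ k ⬝ᵥ ψ l = if k = l then 1 else 0) : of ψ * (of ψ)ᵀ = 1 := by
  ext k l
  rw [mul_apply', one_apply]
  exact h k l

theorem conj_diagonal_mul (hU : U * Uᵀ = 1) (f g : n → ℝ) :
    Uᵀ * diagonal f * U * (Uᵀ * diagonal g * U) = Uᵀ * diagonal (f * g) * U := by
  calc Uᵀ * diagonal f * U * (Uᵀ * diagonal g * U)
      = Uᵀ * diagonal f * (U * Uᵀ) * diagonal g * U := by simp only [Matrix.mul_assoc]
    _ = Uᵀ * diagonal (f * g) * U := by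
        rw [hU, Matrix.mul_one, Matrix.mul_assoc Uᵀ, diagonal_mul_diagonal]
        rfl

theorem conj_diagonal_one (hU : U * Uᵀ = 1) : Uᵀ * diagonal 1 * U = 1 := by
  rw [show diagonal (1 : n → ℝ) = 1 from diagonal_one, Matrix.mul_one, mul_eq_one_comm.mp hU]

theorem conj_diagonal_pow (hU : U * Uᵀ = 1) (f : n → ℝ) (m : ℕ) :
    (Uᵀ * diagonal f * U) ^ m = Uᵀ * diagonal (f ^ m) * U := by
  induction m with
  | zero => rw [pow_zero, pow_zero, conj_diagonal_one hU]
  | succ m ih => rw [pow_succ, ih, conj_diagonal_mul hU, pow_succ]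

theorem one_sub_conj_diagonal (hU : U * Uᵀ = 1) (f : n → ℝ) :
    1 - Uᵀ * diagonal f * U = Uᵀ * diagonal (1 - f) * U := by
  rw [show diagonal (1 - f) = diagonal 1 - diagonal f from (diagonal_sub _ _).symm,
    Matrix.mul_sub, Matrix.sub_mul, conj_diagonal_one hU]

theorem transpose_conj_diagonal (f : n → ℝ) :
    (Uᵀ * diagonal f * U)ᵀ = Uᵀ * diagonal f * U := by
  rw [transpose_mul, transpose_mul, diagonal_transpose, transpose_transpose, Matrix.mul_assoc]

/-- `f⁻¹` is taken pointwise with `0⁻¹ = 0`, so `f` may vanish. -/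
theorem isMoorePenrose_conj_diagonal (hU : U * Uᵀ = 1) (f : n → ℝ) :
    IsMoorePenrose (Uᵀ * diagonal f * U) (Uᵀ * diagonal f⁻¹ * U) := by
  have hf : f * f⁻¹ * f = f := funext fun k => mul_inv_mul_cancel (f k)
  have hf' : f⁻¹ * f * f⁻¹ = f⁻¹ := funext fun k => by
    simpa using mul_inv_mul_cancel (f k)⁻¹
  refine ⟨?_, ?_, ?_, ?_⟩ <;>
    simp only [conj_diagonal_mul hU, transpose_conj_diagonal, hf, hf']

theorem conj_diagonal_apply_self (f : n → ℝ) (i : n) :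
    (Uᵀ * diagonal f * U) i i = ∑ k, f k * U k i ^ 2 := by
  rw [mul_apply]
  refine sum_congr rfl fun k _ => ?_
  rw [mul_diagonal, transpose_apply]
  ring

theorem sum_sq_apply_eq_one (hU : U * Uᵀ = 1) (i : n) : ∑ k, U k i ^ 2 = 1 := by
  have h := conj_diagonal_apply_self (U := U) 1 i
  rw [conj_diagonal_one hU, one_apply_eq] at h
  simpa using h.symm

theorem eq_conj_diagonal_of_mulVec_eq_smul (hU : U * Uᵀ = 1) {S : Matrix n n ℝ}
    {lam : n → ℝ} (h : ∀ k, S *ᵥ U k = lam k • U k) : S = Uᵀ * diagonal lam * U := by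
  have hSU : S * Uᵀ = Uᵀ * diagonal lam := by
    ext j k
    rw [mul_apply', mul_diagonal]
    exact (congrFun (h k) j).trans (mul_comm _ _)
  calc S = S * (Uᵀ * U) := by rw [mul_eq_one_comm.mp hU, Matrix.mul_one]
    _ = Uᵀ * diagonal lam * U := by rw [← Matrix.mul_assoc, hSU]

theorem eq_smul_of_conj_diagonal_mulVec_eq_self (hU : U * Uᵀ = 1) {lam : n → ℝ} {k₀ : n}
    (hlam : ∀ k ≠ k₀, lam k ≠ 1) {v : n → ℝ} (hv : (Uᵀ * diagonal lam * U) *ᵥ v = v) :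
    v = (U k₀ ⬝ᵥ v) • U k₀ := by
  have hfix : diagonal lam *ᵥ (U *ᵥ v) = U *ᵥ v := by
    conv_rhs => rw [← hv]
    rw [mulVec_mulVec, mulVec_mulVec, ← Matrix.mul_assoc, ← Matrix.mul_assoc, hU,
      Matrix.one_mul]
  have hcoord : U *ᵥ v = Pi.single k₀ (U k₀ ⬝ᵥ v) := by
    ext k
    by_cases hk : k = k₀
    · subst hk
      rw [Pi.single_eq_same]
      rfl
    · rw [Pi.single_eq_of_ne hk]
      have hk' := congrFun hfix k
      rw [mulVec_diagonal] at hk'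
      exact (mul_left_eq_self₀.mp hk').resolve_left (hlam k hk)
  calc v = (Uᵀ * U) *ᵥ v := by rw [mul_eq_one_comm.mp hU, one_mulVec]
    _ = (U k₀ ⬝ᵥ v) • U k₀ := by
        rw [← mulVec_mulVec, hcoord]
        ext i
        simp [mulVec_single, mul_comm]

end OrthogonalConj

theorem diagonal_mul_mul_diagonal_pow_apply_self {n R : Type*} [Fintype n] [DecidableEq n]
    [CommSemiring R] {a b : n → R} (hab : ∀ i, a i * b i = 1) (M : Matrix n n R) (m : ℕ)
    (i : n) : ((diagonal a * M * diagonal b) ^ m) i i = (M ^ m) i i := by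
  have hab' : diagonal a * diagonal b = 1 := by
    rw [diagonal_mul_diagonal, funext hab, diagonal_one]
  have hba' : diagonal b * diagonal a = 1 := by
    rw [diagonal_mul_diagonal, funext fun i => (mul_comm _ _).trans (hab i), diagonal_one]
  have hsemi : SemiconjBy (diagonal a) M (diagonal a * M * diagonal b) := by
    rw [SemiconjBy, Matrix.mul_assoc _ (diagonal b), hba', Matrix.mul_one]
  have hpow : (diagonal a * M * diagonal b) ^ m = diagonal a * M ^ m * diagonal b := by
    rw [(hsemi.pow_right m).eq, Matrix.mul_assoc _ (diagonal a), hab', Matrix.mul_one]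
  rw [hpow, mul_diagonal, diagonal_mul, mul_right_comm, hab, one_mul]

section NormalizedAdjacency

variable {n : Type*} [Fintype n] [DecidableEq n] {A : Matrix n n ℝ} {d : n → ℝ}

theorem normalizedAdjacency_mulVec_sqrt (hd : ∀ i, d i = ∑ j, A i j) (hdpos : ∀ i, 0 < d i) :
    (diagonal (fun i => (√(d i))⁻¹) * A * diagonal (fun i => (√(d i))⁻¹)) *ᵥ (fun i => √(d i))
      = fun i => √(d i) := by
  ext i
  have hsq : ∀ j, √(d j) ≠ 0 := fun j => (Real.sqrt_pos.mpr (hdpos j)).ne'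
  simp only [mulVec, dotProduct, mul_diagonal, diagonal_mul]
  simp only [mul_assoc, inv_mul_cancel₀ (hsq _), mul_one, ← mul_sum, ← hd]
  rw [inv_mul_eq_div, Real.div_sqrt]

theorem diagonal_inv_mul_pow_apply_self (hdpos : ∀ i, 0 < d i) (m : ℕ) (i : n) :
    ((diagonal (fun i => (d i)⁻¹) * A) ^ m) i i
      = ((diagonal (fun i => (√(d i))⁻¹) * A * diagonal (fun i => (√(d i))⁻¹)) ^ m) i i := by
  have hsq : ∀ j, √(d j) ≠ 0 := fun j => (Real.sqrt_pos.mpr (hdpos j)).ne'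
  have hconj : diagonal (fun i => (d i)⁻¹) * A
      = diagonal (fun i => (√(d i))⁻¹)
        * (diagonal (fun i => (√(d i))⁻¹) * A * diagonal (fun i => (√(d i))⁻¹))
        * diagonal (fun i => √(d i)) := by
    ext i j
    simp only [mul_diagonal, diagonal_mul]
    field_simp
    rw [mul_div_mul_right _ _ (hsq j), Real.sq_sqrt (hdpos i).le]
  rw [hconj]
  exact diagonal_mul_mul_diagonal_pow_apply_self (fun i => inv_mul_cancel₀ (hsq i)) _ m i

end NormalizedAdjacency

theorem div_sum_eq_sq_of_sqrt_eq_smul {n : Type*} [Fintype n] {d u : n → ℝ} {c : ℝ}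
    (hdpos : ∀ i, 0 < d i) (hu : u ⬝ᵥ u = 1) (h : (fun i => √(d i)) = c • u) (i : n) :
    d i / ∑ j, d j = u i ^ 2 := by
  have hd : ∀ j, d j = c ^ 2 * u j ^ 2 := fun j => by
    rw [← Real.sq_sqrt (hdpos j).le, congrFun h j, Pi.smul_apply, smul_eq_mul, mul_pow]
  have hsum : ∑ j, d j = c ^ 2 := by
    have hu' : ∑ j, u j ^ 2 = 1 := by simpa only [dotProduct, sq] using hu
    simp only [hd, ← mul_sum, hu', mul_one]
  have hc : c ^ 2 ≠ 0 := by
    rw [← hsum]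
    exact (sum_pos (fun j _ => hdpos j) ⟨i, mem_univ i⟩).ne'
  rw [hsum, hd i, mul_div_cancel_left₀ _ hc]

theorem abs_le_max_abs_of_antitone {N : ℕ} {f : Fin N → ℝ} (hf : Antitone f) (hN : 2 ≤ N) {k : Fin N}
    (hk : k ≠ ⟨0, Nat.zero_lt_of_lt hN⟩) :
    |f k| ≤ max |f ⟨1, hN⟩| |f ⟨N - 1, Nat.sub_lt (Nat.zero_lt_of_lt hN) Nat.one_pos⟩| := by
  rw [max_comm]
  exact abs_le_max_abs_abs (hf (Fin.le_def.mpr (Nat.le_sub_one_of_lt k.isLt)))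
    (hf (Fin.le_def.mpr (Nat.one_le_iff_ne_zero.mpr fun h => hk (Fin.ext h))))

theorem inv_one_sub_sub_geom_sum {K : Type*} [Field K] {x : K} (hx : x ≠ 1) (ℓ : ℕ) :
    (1 - x)⁻¹ - ∑ j ∈ range ℓ, x ^ j = x ^ ℓ / (1 - x) := by
  have h : 1 - x ≠ 0 := sub_ne_zero.mpr hx.symm
  rw [geom_sum_eq hx, ← neg_sub 1 x, div_neg, sub_neg_eq_add]
  field_simp
  ring

/-- By `0⁻¹ = 0` the `k₀` term of the first sum vanishes. -/
theorem abs_sum_inv_one_sub_sub_sum_range_le {ι : Type*} [Fintype ι] [DecidableEq ι]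
    {μ w : ι → ℝ} {k₀ : ι} {r : ℝ} (hμk₀ : μ k₀ = 1) (hμ : ∀ k ≠ k₀, 0 ≤ μ k ∧ μ k ≤ r)
    (hr₀ : 0 ≤ r) (hr : r < 1) (hw : ∀ k, 0 ≤ w k) (ℓ : ℕ) :
    |∑ k, (1 - μ k)⁻¹ * w k - ∑ j ∈ range ℓ, (∑ k, μ k ^ j * w k - w k₀)|
      ≤ r ^ ℓ / (1 - r) * ∑ k, w k := by
  have hsum₀ : ∑ k, (1 - μ k)⁻¹ * w k = ∑ k ∈ univ.erase k₀, (1 - μ k)⁻¹ * w k := by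
    rw [sum_erase_eq_sub (mem_univ _), hμk₀, sub_self, _root_.inv_zero, zero_mul, sub_zero]
  have hsum : ∀ j : ℕ, ∑ k, μ k ^ j * w k - w k₀ = ∑ k ∈ univ.erase k₀, μ k ^ j * w k := by
    intro j
    rw [sum_erase_eq_sub (mem_univ _), hμk₀, one_pow, one_mul]
  have herr : ∑ k, (1 - μ k)⁻¹ * w k - ∑ j ∈ range ℓ, (∑ k, μ k ^ j * w k - w k₀)
      = ∑ k ∈ univ.erase k₀, μ k ^ ℓ / (1 - μ k) * w k := by
    simp only [hsum₀, hsum]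
    rw [sum_comm, ← sum_sub_distrib]
    refine sum_congr rfl fun k hk => ?_
    have hμk := hμ k (ne_of_mem_erase hk)
    rw [← sum_mul, ← sub_mul, inv_one_sub_sub_geom_sum (by linarith) ℓ]
  have hterm : ∀ k ∈ univ.erase k₀, 0 ≤ μ k ^ ℓ / (1 - μ k) * w k ∧
      μ k ^ ℓ / (1 - μ k) * w k ≤ r ^ ℓ / (1 - r) * w k := by
    intro k hk
    obtain ⟨hμk0, hμkr⟩ := hμ k (ne_of_mem_erase hk)
    have h1 : 0 < 1 - μ k := by linarith
    refine ⟨mul_nonneg (div_nonneg (pow_nonneg hμk0 ℓ) h1.le) (hw k),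
      mul_le_mul_of_nonneg_right ?_ (hw k)⟩
    exact div_le_div₀ (pow_nonneg (hμk0.trans hμkr) ℓ) (pow_le_pow_left₀ hμk0 hμkr ℓ)
      (by linarith) (by linarith)
  rw [herr, abs_of_nonneg (sum_nonneg fun k hk => (hterm k hk).1), mul_sum]
  calc ∑ k ∈ univ.erase k₀, μ k ^ ℓ / (1 - μ k) * w k
      ≤ ∑ k ∈ univ.erase k₀, r ^ ℓ / (1 - r) * w k := sum_le_sum fun k hk => (hterm k hk).2
    _ ≤ ∑ k, r ^ ℓ / (1 - r) * w k :=
        sum_le_sum_of_subset_of_nonneg (erase_subset _ _) fun k _ _ =>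
          mul_nonneg (div_nonneg (pow_nonneg hr₀ ℓ) (by linarith)) (hw k)

theorem pow_le_of_log_inv_le {x r : ℝ} {m : ℕ} (hx : 0 < x) (hr : 0 < r)
    (h : Real.log x⁻¹ ≤ m * Real.log r⁻¹) : r ^ m ≤ x := by
  rw [← Real.log_pow, Real.log_le_log_iff (inv_pos.2 hx) (by positivity), inv_pow] at h
  exact (inv_le_inv₀ hx (pow_pos hr m)).mp h

theorem sq_pow_div_one_sub_sq_le {lam ε : ℝ} {ℓ : ℕ} (hlam₀ : 0 < lam) (hlam₁ : lam < 1)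
    (hε : 0 < ε)
    (hℓ : Real.log (2 / (ε * (1 - lam))) / (2 * Real.log (1 / lam)) ≤ ℓ) :
    (lam ^ 2) ^ ℓ / (1 - lam ^ 2) ≤ ε / 2 := by
  have hgap : 0 < 1 - lam := by linarith
  have hlog : 0 < Real.log (1 / lam) :=
    Real.log_pos (by rw [one_div]; exact (one_lt_inv₀ hlam₀).mpr hlam₁)
  have hpow : lam ^ (2 * ℓ) ≤ ε * (1 - lam) / 2 := by
    refine pow_le_of_log_inv_le (by positivity) hlam₀ ?_
    rw [div_le_iff₀ (by positivity)] at hℓ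
    rw [inv_div, ← one_div]
    push_cast
    linarith
  calc (lam ^ 2) ^ ℓ / (1 - lam ^ 2) ≤ lam ^ (2 * ℓ) / (1 - lam) := by
        rw [← pow_mul]
        gcongr
        nlinarith
    _ ≤ ε / 2 := by
        rw [div_le_iff₀ hgap]
        nlinarith

/-- for the normalized adjacency matrix `S` of a connected weighted
graph with transition matrix `P` and stationary distribution `π`, if `S` has an
orthonormal eigenbasis with eigenvalues `1 = λ₁ > λ₂ ≥ ⋯ ≥ λ_N > −1` and
`λ = max(|λ₂|,|λ_N|) ∈ (0,1)`, then for every `ε > 0`, every integer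
`ℓ ≥ log(2/(ε(1−λ)))/(2 log(1/λ))` and every node `i`, the truncated series
`Σ_{j=0}^{ℓ−1} ((P^{2j})_{ii} − π_i)` approximates `((I−S²)†)_{ii}` within `ε/2`. -/
theorem stmt2 (N : ℕ) (hN : 2 ≤ N)
    (A : Matrix (Fin N) (Fin N) ℝ)
    (d : Fin N → ℝ) (hd : ∀ i, d i = ∑ j, A i j) (hdpos : ∀ i, 0 < d i)
    (dsum : ℝ) (hdsum : dsum = ∑ i, d i)
    (P : Matrix (Fin N) (Fin N) ℝ)
    (hP : P = Matrix.diagonal (fun i => (d i)⁻¹) * A)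
    (S : Matrix (Fin N) (Fin N) ℝ)
    (hSdef : S = Matrix.diagonal (fun i => (Real.sqrt (d i))⁻¹) * A *
        Matrix.diagonal (fun i => (Real.sqrt (d i))⁻¹))
    (pv : Fin N → ℝ) (hpv : ∀ i, pv i = d i / dsum)
    (ψ : Fin N → (Fin N → ℝ)) (lam : Fin N → ℝ)
    (heig : ∀ k, S.mulVec (ψ k) = lam k • ψ k)
    (horth : ∀ k l, ψ k ⬝ᵥ ψ l = if k = l then 1 else 0)
    (hlam0 : lam ⟨0, by omega⟩ = 1)
    (hanti : ∀ k l : Fin N, k ≤ l → lam l ≤ lam k)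
    (lamStar : ℝ)
    (hlamStar : lamStar = max |lam ⟨1, by omega⟩| |lam ⟨N - 1, by omega⟩|)
    (hlamStar0 : 0 < lamStar) (hlamStar1 : lamStar < 1)
    (Q : Matrix (Fin N) (Fin N) ℝ)
    (hQ : IsMoorePenrose (1 - S ^ 2) Q)
    (ε : ℝ) (hε : 0 < ε) (ℓ : ℕ)
    (hℓ : Real.log (2 / (ε * (1 - lamStar))) / (2 * Real.log (1 / lamStar)) ≤ ℓ)
    (i : Fin N) :
    |Q i i - ∑ j ∈ Finset.range ℓ, ((P ^ (2 * j)) i i - pv i)| ≤ ε / 2 := by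
  set U : Matrix (Fin N) (Fin N) ℝ := of ψ
  have hU : U * Uᵀ = 1 := of_mul_transpose_of_orthonormal horth
  have hS : S = Uᵀ * diagonal lam * U := eq_conj_diagonal_of_mulVec_eq_smul hU heig
  have hlam : ∀ k ≠ ⟨0, by omega⟩, |lam k| ≤ lamStar := fun k hk =>
    hlamStar ▸ abs_le_max_abs_of_antitone (fun k l => hanti k l) hN hk
  have hQU : Q = Uᵀ * diagonal (1 - lam ^ 2)⁻¹ * U := by
    refine hQ.unique ?_
    rw [hS, conj_diagonal_pow hU, one_sub_conj_diagonal hU]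
    exact isMoorePenrose_conj_diagonal hU _
  have hsqrt := eq_smul_of_conj_diagonal_mulVec_eq_self hU
    (fun k hk => ((le_abs_self _).trans_lt ((hlam k hk).trans_lt hlamStar1)).ne)
    (hS ▸ hSdef ▸ normalizedAdjacency_mulVec_sqrt hd hdpos)
  have hpvU : pv i = U ⟨0, by omega⟩ i ^ 2 := by
    rw [hpv, hdsum]
    exact div_sum_eq_sq_of_sqrt_eq_smul hdpos ((horth _ _).trans (if_pos rfl)) hsqrt i
  calc _ = |∑ k, (1 - lam k ^ 2)⁻¹ * U k i ^ 2
          - ∑ j ∈ range ℓ, (∑ k, (lam k ^ 2) ^ j * U k i ^ 2 - U ⟨0, by omega⟩ i ^ 2)| := by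
        simp only [hQU, conj_diagonal_apply_self, hP, diagonal_inv_mul_pow_apply_self hdpos,
          ← hSdef, pow_mul, hS, conj_diagonal_pow hU, hpvU, Pi.inv_apply, Pi.sub_apply,
          Pi.pow_apply, Pi.one_apply]
    _ ≤ (lamStar ^ 2) ^ ℓ / (1 - lamStar ^ 2) * ∑ k, U k i ^ 2 :=
        abs_sum_inv_one_sub_sub_sum_range_le (μ := fun k => lam k ^ 2) (by simp [hlam0])
          (fun k hk => ⟨sq_nonneg _, (sq_abs (lam k)).symm.trans_le
            (pow_le_pow_left₀ (abs_nonneg _) (hlam k hk) 2)⟩)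
          (sq_nonneg _) (by nlinarith) (fun k => sq_nonneg _) ℓ
    _ ≤ ε / 2 := by
        rw [sum_sq_apply_eq_one hU, mul_one]
        exact sq_pow_div_one_sub_sq_le hlamStar0 hlamStar1 hε hℓ
end

section
/- Let L be a real symmetric positive semidefinite N×N matrix satisfying L𝟏 = 𝟎 whose kernel is exactly the span of the all-ones vector 𝟏, let D be a diagonal N×N matrix with positive diagonal entries d₁,…,d_N, set d_sum = Σ_i d_i, 𝓛 = D^{-1/2} L D^{-1/2}, and let π ∈ ℝ^N be the vector with π_i = d_i/d_sum. Then the weighted trace identity Σ_{i=1}^{N} π_i (e_iᵀ 𝓛† e_i) = d_sum · Σ_{i=1}^{N} π_i² (e_i − π)ᵀ L† (e_i − π) holds. -/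
open Matrix

theorem Matrix.isIdempotentElem_one_sub_vecMulVec {n R : Type*} [Fintype n] [DecidableEq n]
    [CommRing R] {u v : n → R} (h : v ⬝ᵥ u = 1) : IsIdempotentElem (1 - vecMulVec u v) := by
  rw [IsIdempotentElem, sub_mul, mul_sub, mul_sub, vecMulVec_mul_vecMulVec, h, one_smul]
  simp only [Matrix.one_mul, Matrix.mul_one, sub_self, sub_zero]

theorem Matrix.dotProduct_transpose_mul_mul_mulVec {m n R : Type*} [Fintype m] [Fintype n]
    [CommSemiring R] (A : Matrix m n R) (B : Matrix m m R) (x y : n → R) :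
    x ⬝ᵥ (Aᵀ * B * A) *ᵥ y = (A *ᵥ x) ⬝ᵥ B *ᵥ (A *ᵥ y) := by
  rw [← mulVec_mulVec, ← mulVec_mulVec, dotProduct_mulVec, vecMul_transpose]

namespace IsMoorePenrose

variable {n : Type*} [Fintype n] [DecidableEq n] {M P Q : Matrix n n ℝ}

theorem transpose (h : IsMoorePenrose M P) : IsMoorePenrose Mᵀ Pᵀ := by
  obtain ⟨hMPM, hPMP, hMP, hPM⟩ := h
  refine ⟨?_, ?_, ?_, ?_⟩
  · rw [← transpose_mul, ← transpose_mul, ← Matrix.mul_assoc, hMPM]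
  · rw [← transpose_mul, ← transpose_mul, ← Matrix.mul_assoc, hPMP]
  · rw [← transpose_mul, transpose_transpose, hPM]
  · rw [← transpose_mul, transpose_transpose, hMP]

theorem unique_s7 (h : IsMoorePenrose M P) (h' : IsMoorePenrose M Q) : P = Q := by
  obtain ⟨hMPM, hPMP, hMP, hPM⟩ := h
  obtain ⟨hMQM, hQMQ, hMQ, hQM⟩ := h'
  have hMP_eq : M * P = M * Q :=
    calc M * P = (M * Q * M * P)ᵀ := by rw [hMQM, hMP]
      _ = (M * P)ᵀ * (M * Q)ᵀ := by rw [← transpose_mul]; simp only [Matrix.mul_assoc]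
      _ = M * P * M * Q := by rw [hMP, hMQ]; simp only [Matrix.mul_assoc]
      _ = M * Q := by rw [hMPM]
  have hPM_eq : P * M = Q * M :=
    calc P * M = (P * (M * Q * M))ᵀ := by rw [hMQM, hPM]
      _ = (Q * M)ᵀ * (P * M)ᵀ := by rw [← transpose_mul]; simp only [Matrix.mul_assoc]
      _ = Q * (M * P * M) := by rw [hPM, hQM]; simp only [Matrix.mul_assoc]
      _ = Q * M := by rw [hMPM]
  calc P = P * M * P := hPMP.symm
    _ = Q * M * Q := by rw [Matrix.mul_assoc, hMP_eq, ← Matrix.mul_assoc, hPM_eq]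
    _ = Q := hQMQ

theorem isSymm (h : IsMoorePenrose M P) (hM : M.IsSymm) : P.IsSymm :=
  (hM.eq ▸ h.transpose).unique_s7 h

theorem of_mul_eq {C : Matrix n n ℝ} (hMP : M * P = C) (hPM : P * M = C) (hC : C.IsSymm)
    (hCM : C * M = M) (hPC : P * C = P) : IsMoorePenrose M P :=
  ⟨by rw [hMP, hCM], by rw [Matrix.mul_assoc, hMP, hPC], by rw [hMP, hC.eq], by rw [hPM, hC.eq]⟩

theorem mul_mulVec_eq_self (h : IsMoorePenrose M P) (hM : M.IsSymm) {v : n → ℝ}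
    (hv : ∀ w, M *ᵥ w = 0 → w ⬝ᵥ v = 0) : (M * P) *ᵥ v = v := by
  obtain ⟨hMPM, -, hMP, -⟩ := h
  set w := v - (M * P) *ᵥ v
  have hMMP : M * (M * P) = M := by
    simpa only [transpose_mul, hMP, hM.eq] using congrArg Matrix.transpose hMPM
  have hMw : M *ᵥ w = 0 := by
    rw [mulVec_sub, mulVec_mulVec, hMMP, sub_self]
  have hMPw : (M * P) *ᵥ w = 0 := by
    rw [← hMP, transpose_mul, ← mulVec_mulVec, hM.eq, hMw, mulVec_zero]
  have hww : w ⬝ᵥ w = 0 := by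
    rw [dotProduct_sub, hv w hMw, dotProduct_mulVec, ← mulVec_transpose, hMP, hMPw,
      zero_dotProduct, sub_self]
  exact (sub_eq_zero.mp (dotProduct_self_eq_zero.mp hww)).symm

theorem mul_mul_eq_self (h : IsMoorePenrose M P) (hM : M.IsSymm) {X : Matrix n n ℝ}
    (hX : ∀ w, M *ᵥ w = 0 → w ᵥ* X = 0) : M * P * X = X :=
  ext_of_mulVec_single fun i => by
    rw [← mulVec_mulVec, h.mul_mulVec_eq_self hM fun w hw => by
      rw [dotProduct_mulVec, hX w hw, zero_dotProduct]]

/-- `Tᵀ * A` plays the role of the projection `M * M† = M† * M` for `M = Tᵀ * L * T`. -/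
theorem congruence {L T A : Matrix n n ℝ} (h : IsMoorePenrose L P) (hL : L.IsSymm)
    (hLTA : L * T * Aᵀ = L) (hLPA : L * P * A = A) (hTA : (Tᵀ * A).IsSymm)
    (hATA : A * Tᵀ * A = A) : IsMoorePenrose (Tᵀ * L * T) (Aᵀ * P * A) := by
  have hATL : A * Tᵀ * L = L := by
    simpa only [transpose_mul, transpose_transpose, hL.eq, Matrix.mul_assoc] using
      congrArg Matrix.transpose hLTA
  have hPL : P * L = L * P := by
    rw [← h.2.2.2, transpose_mul, hL.eq, (h.isSymm hL).eq]
  refine of_mul_eq (C := Tᵀ * A) ?_ ?_ hTA ?_ ?_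
  · calc Tᵀ * L * T * (Aᵀ * P * A) = Tᵀ * (L * T * Aᵀ * P * A) := by noncomm_ring
      _ = Tᵀ * A := by rw [hLTA, hLPA]
  · calc Aᵀ * P * A * (Tᵀ * L * T) = Aᵀ * (P * (A * Tᵀ * L)) * T := by noncomm_ring
      _ = (L * P * A)ᵀ * T := by rw [hATL, hPL, transpose_mul (L * P) A, h.2.2.1]
      _ = Tᵀ * A := by rw [hLPA, ← hTA.eq, transpose_mul, transpose_transpose]
  · rw [show Tᵀ * A * (Tᵀ * L * T) = Tᵀ * (A * Tᵀ * L) * T by noncomm_ring, hATL]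
  · rw [show Aᵀ * P * A * (Tᵀ * A) = Aᵀ * P * (A * Tᵀ * A) by noncomm_ring, hATA]

end IsMoorePenrose

noncomputable section Normalization

variable {n : Type*} [Fintype n]

def normalizedWeights (d : n → ℝ) : n → ℝ := fun i => d i / ∑ j, d j

theorem one_dotProduct_normalizedWeights {d : n → ℝ} (hd : ∑ i, d i ≠ 0) :
    1 ⬝ᵥ normalizedWeights d = 1 := by
  simp only [one_dotProduct, normalizedWeights, ← Finset.sum_div, div_self hd]

variable [DecidableEq n]

def centeredSqrtDiagonal (d : n → ℝ) : Matrix n n ℝ :=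
  (1 - vecMulVec (normalizedWeights d) 1) * diagonal fun i => √(d i)

variable {d : n → ℝ}

theorem centeredSqrtDiagonal_mulVec_single (i : n) :
    centeredSqrtDiagonal d *ᵥ Pi.single i 1 =
      √(d i) • (Pi.single i 1 - normalizedWeights d) := by
  rw [centeredSqrtDiagonal, ← mulVec_mulVec, diagonal_mulVec_single, mul_one, sub_mulVec,
    one_mulVec, vecMulVec_mulVec]
  ext j
  simp [Pi.single_apply, mul_sub]

theorem const_vecMul_centeredSqrtDiagonal (hd : ∑ i, d i ≠ 0) (c : ℝ) :
    (fun _ => c) ᵥ* centeredSqrtDiagonal d = 0 := by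
  rw [show (fun _ : n => c) = c • 1 from funext fun _ => (mul_one c).symm, centeredSqrtDiagonal,
    ← vecMul_vecMul, vecMul_sub, vecMul_one, vecMul_vecMulVec, smul_dotProduct,
    one_dotProduct_normalizedWeights hd, smul_eq_mul, mul_one, sub_self, zero_vecMul]

theorem mul_diagonal_inv_sqrt_mul_transpose_centeredSqrtDiagonal {L : Matrix n n ℝ}
    (hL1 : L *ᵥ 1 = 0) (hd : ∀ i, 0 < d i) :
    L * (diagonal fun i => (√(d i))⁻¹) * (centeredSqrtDiagonal d)ᵀ = L := by
  have hTS : (diagonal fun i => (√(d i))⁻¹) * (diagonal fun i => √(d i)) = 1 := by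
    rw [diagonal_mul_diagonal, ← diagonal_one]
    exact congrArg diagonal (funext fun i => inv_mul_cancel₀ (Real.sqrt_pos.2 (hd i)).ne')
  rw [centeredSqrtDiagonal, transpose_mul, diagonal_transpose, ← Matrix.mul_assoc,
    Matrix.mul_assoc L, hTS, Matrix.mul_one, transpose_sub, transpose_one, transpose_vecMulVec,
    mul_sub, Matrix.mul_one, mul_vecMulVec, hL1, zero_vecMulVec, sub_zero]

theorem centeredSqrtDiagonal_mul_diagonal_inv_sqrt_mul_self (hd : ∀ i, 0 < d i)
    (hsum : ∑ i, d i ≠ 0) :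
    centeredSqrtDiagonal d * (diagonal fun i => (√(d i))⁻¹) * centeredSqrtDiagonal d =
      centeredSqrtDiagonal d := by
  have hST : (diagonal fun i => √(d i)) * (diagonal fun i => (√(d i))⁻¹) = 1 := by
    rw [diagonal_mul_diagonal, ← diagonal_one]
    exact congrArg diagonal (funext fun i => mul_inv_cancel₀ (Real.sqrt_pos.2 (hd i)).ne')
  rw [centeredSqrtDiagonal]
  simp only [Matrix.mul_assoc]
  rw [← Matrix.mul_assoc (diagonal fun i => √(d i)), hST, Matrix.one_mul, ← Matrix.mul_assoc,
    (isIdempotentElem_one_sub_vecMulVec (one_dotProduct_normalizedWeights hsum)).eq]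

theorem isSymm_diagonal_inv_sqrt_mul_centeredSqrtDiagonal (hd : ∀ i, 0 < d i) :
    ((diagonal fun i => (√(d i))⁻¹) * centeredSqrtDiagonal d).IsSymm := by
  refine IsSymm.ext fun i j => ?_
  rcases eq_or_ne i j with rfl | hij
  · rfl
  simp only [centeredSqrtDiagonal, vecMulVec_one, mul_apply, diagonal_apply, Matrix.sub_apply,
    one_apply, replicateCol_apply, normalizedWeights, if_neg hij, if_neg hij.symm, ite_mul,
    zero_mul, Finset.sum_ite_eq, Finset.mem_univ, if_true, mul_ite, mul_zero, Finset.sum_ite_eq']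
  have hsqrt : ∀ k, √(d k) ≠ 0 := fun k => (Real.sqrt_pos.2 (hd k)).ne'
  set σ := ∑ k, d k
  field_simp
  rw [div_eq_div_iff (hsqrt j) (hsqrt i)]
  linear_combination (-d j / σ) * Real.mul_self_sqrt (hd i).le +
    d i / σ * Real.mul_self_sqrt (hd j).le

theorem isMoorePenrose_diagonal_inv_sqrt_mul_mul [Nonempty n] {L Lp : Matrix n n ℝ}
    (hLp : IsMoorePenrose L Lp) (hL : L.IsSymm)
    (hker : ∀ v, L *ᵥ v = 0 → ∃ c : ℝ, v = fun _ => c) (hL1 : L *ᵥ 1 = 0)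
    (hd : ∀ i, 0 < d i) :
    IsMoorePenrose (diagonal (fun i => (√(d i))⁻¹) * L * diagonal fun i => (√(d i))⁻¹)
      ((centeredSqrtDiagonal d)ᵀ * Lp * centeredSqrtDiagonal d) := by
  have hsum : ∑ i, d i ≠ 0 := (Finset.sum_pos (fun i _ => hd i) Finset.univ_nonempty).ne'
  have hLPA : L * Lp * centeredSqrtDiagonal d = centeredSqrtDiagonal d :=
    hLp.mul_mul_eq_self hL fun w hw => by
      obtain ⟨c, rfl⟩ := hker w hw
      exact const_vecMul_centeredSqrtDiagonal hsum c
  have h := hLp.congruence hL (mul_diagonal_inv_sqrt_mul_transpose_centeredSqrtDiagonal hL1 hd)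
    hLPA (by rw [diagonal_transpose]; exact isSymm_diagonal_inv_sqrt_mul_centeredSqrtDiagonal hd)
    (by rw [diagonal_transpose]; exact centeredSqrtDiagonal_mul_diagonal_inv_sqrt_mul_self hd hsum)
  rwa [diagonal_transpose] at h

end Normalization

/-- with `L`, `D`, `𝓛 = D^{-1/2} L D^{-1/2}` and `π_i = d_i/d_sum`
as below, the weighted trace identity
`Σ_i π_i (e_iᵀ 𝓛† e_i) = d_sum · Σ_i π_i² (e_i − π)ᵀ L† (e_i − π)` holds. -/
theorem stmt7 (N : ℕ) (hN : 2 ≤ N)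
    (L : Matrix (Fin N) (Fin N) ℝ) (hPSD : L.PosSemidef)
    (hker : ∀ v : Fin N → ℝ, L.mulVec v = 0 ↔ ∃ c : ℝ, v = fun _ => c)
    (hL1 : L.mulVec (fun _ => 1) = 0)
    (d : Fin N → ℝ) (hdpos : ∀ i, 0 < d i)
    (dsum : ℝ) (hdsum : dsum = ∑ i, d i)
    (pv : Fin N → ℝ) (hpv : ∀ i, pv i = d i / dsum)
    (Lp Np : Matrix (Fin N) (Fin N) ℝ)
    (hLp : IsMoorePenrose L Lp)
    (hNp : IsMoorePenrose
        (Matrix.diagonal (fun i => (Real.sqrt (d i))⁻¹) * L *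
          Matrix.diagonal (fun i => (Real.sqrt (d i))⁻¹)) Np) :
    ∑ i, pv i * (Pi.single i 1 ⬝ᵥ Np.mulVec (Pi.single i 1)) =
      dsum * ∑ i, (pv i) ^ 2 *
        ((Pi.single i 1 - pv) ⬝ᵥ Lp.mulVec (Pi.single i 1 - pv)) := by
  have : Nonempty (Fin N) := ⟨⟨0, by omega⟩⟩
  have hdsum_pos : 0 < dsum := hdsum ▸ Finset.sum_pos (fun i _ => hdpos i) Finset.univ_nonempty
  have hL : L.IsSymm := isHermitian_iff_isSymm.1 hPSD.isHermitian
  have hNp_eq := hNp.unique_s7 (isMoorePenrose_diagonal_inv_sqrt_mul_mul hLp hL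
    (fun v => (hker v).1) hL1 hdpos)
  obtain rfl : pv = normalizedWeights d := funext fun i => by rw [hpv, hdsum]; rfl
  have hdiag (i : Fin N) : Pi.single i 1 ⬝ᵥ Np *ᵥ Pi.single i 1 =
      d i * ((Pi.single i 1 - normalizedWeights d) ⬝ᵥ
        Lp *ᵥ (Pi.single i 1 - normalizedWeights d)) := by
    rw [hNp_eq, dotProduct_transpose_mul_mul_mulVec, centeredSqrtDiagonal_mulVec_single,
      mulVec_smul, smul_dotProduct, dotProduct_smul, smul_eq_mul, smul_eq_mul, ← mul_assoc,
      Real.mul_self_sqrt (hdpos i).le]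
  rw [Finset.mul_sum]
  refine Finset.sum_congr rfl fun i _ => ?_
  rw [hdiag, hpv]
  field_simp
end
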